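/- arXiv:1705.00547 — 6 statements merged into one kernel-verified Lean document; each statement's English description precedes it below -/
import Mathlib

section
/- Let ν* = −d + √(d² + k_p²/k_ω²) and suppose ν satisfies ν* ≤ ν < r⁻¹ or r⁻¹ < ν ≤ ν* (with ν ≠ r⁻¹). Then g(ν) < g(r⁻¹), where g(ν) = (k_p² + ν²k_ω²)/(2m(d+ν)). -/
/-!
Clearing denominators, `g r - g ν` has the sign of `(r - ν) * ((d + ν) * (d + r) - (ν* + d) ^ 2)`,
since `(ν* + d) ^ 2 = d ^ 2 + k_p ^ 2 / k_ω ^ 2`. When `ν* ≤ ν < r` both factors are positive;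
when `r < ν ≤ ν*` both are negative.
-/

theorem droop_cost_sub_droop_cost {m d p w a b : ℝ} (hm : m ≠ 0) (ha : d + a ≠ 0)
    (hb : d + b ≠ 0) :
    (p ^ 2 + b ^ 2 * w ^ 2) / (2 * m * (d + b)) - (p ^ 2 + a ^ 2 * w ^ 2) / (2 * m * (d + a)) =
      (b - a) * (w ^ 2 * ((d + a) * (d + b) - d ^ 2) - p ^ 2) / (2 * m * (d + a) * (d + b)) := by
  field_simp
  ring

theorem sq_lt_mul_of_le_of_lt {s x y : ℝ} (hs : 0 < s) (hsx : s ≤ x) (hxy : x < y) :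
    s ^ 2 < x * y :=
  calc s ^ 2 = s * s := sq s
    _ ≤ x * x := mul_self_le_mul_self hs.le hsx
    _ < x * y := mul_lt_mul_of_pos_left hxy (hs.trans_le hsx)

theorem mul_lt_sq_of_lt_of_le {s x y : ℝ} (hx : 0 < x) (hxy : x < y) (hys : y ≤ s) :
    x * y < s ^ 2 :=
  calc x * y < y * y := mul_lt_mul_of_pos_right hxy (hx.trans hxy)
    _ ≤ s * s := mul_self_le_mul_self (hx.trans hxy).le hys
    _ = s ^ 2 := (sq s).symm

theorem stmt_10_general (m d kp kw rinv : ℝ) (hm : 0 < m) (hd : 0 < d)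
    (hkw : 0 < kw) (hr : 0 < rinv)
    (g : ℝ → ℝ)
    (hg : ∀ ν : ℝ, g ν = (kp ^ 2 + ν ^ 2 * kw ^ 2) / (2 * m * (d + ν)))
    (νs : ℝ) (hνs : νs = -d + Real.sqrt (d ^ 2 + kp ^ 2 / kw ^ 2))
    (ν : ℝ) (hν : (νs ≤ ν ∧ ν < rinv) ∨ (rinv < ν ∧ ν ≤ νs)) :
    g ν < g rinv := by
  set s := Real.sqrt (d ^ 2 + kp ^ 2 / kw ^ 2)
  have hs : 0 < s := Real.sqrt_pos.2 (by positivity)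
  have hkp_sq : kp ^ 2 = kw ^ 2 * (s ^ 2 - d ^ 2) := by
    rw [Real.sq_sqrt (by positivity)]
    field_simp
    ring
  have hdν : 0 < d + ν := by rcases hν with ⟨h, -⟩ | ⟨h, -⟩ <;> linarith
  have hdr : 0 < d + rinv := by linarith
  rw [← sub_pos, hg, hg, droop_cost_sub_droop_cost hm.ne' hdν.ne' hdr.ne']
  have hnum : (rinv - ν) * (kw ^ 2 * ((d + ν) * (d + rinv) - d ^ 2) - kp ^ 2) =
      (rinv - ν) * kw ^ 2 * ((d + ν) * (d + rinv) - s ^ 2) := by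
    rw [hkp_sq]; ring
  refine div_pos ?_ (by positivity)
  rw [hnum]
  rcases hν with ⟨hsν, hνr⟩ | ⟨hrν, hννs⟩
  · have hkey := sq_lt_mul_of_le_of_lt hs (by linarith) (by linarith : d + ν < d + rinv)
    exact mul_pos (mul_pos (sub_pos.2 hνr) (by positivity)) (sub_pos.2 hkey)
  · have hkey := mul_lt_sq_of_lt_of_le hdr (by linarith : d + rinv < d + ν)
      (by linarith : d + ν ≤ s)
    rw [mul_comm (d + ν)]
    exact mul_pos_of_neg_of_neg (mul_neg_of_neg_of_pos (sub_neg.2 hrν) (by positivity))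
      (sub_neg.2 hkey)

theorem stmt_10 (m d kp kw rinv : ℝ) (hm : 0 < m) (hd : 0 < d) (hkp : 0 < kp)
    (hkw : 0 < kw) (hr : 0 < rinv)
    (g : ℝ → ℝ)
    (hg : ∀ ν : ℝ, g ν = (kp ^ 2 + ν ^ 2 * kw ^ 2) / (2 * m * (d + ν)))
    (νs : ℝ) (hνs : νs = -d + Real.sqrt (d ^ 2 + kp ^ 2 / kw ^ 2))
    (ν : ℝ) (hν : (νs ≤ ν ∧ ν < rinv) ∨ (rinv < ν ∧ ν ≤ νs)) :
    g ν < g rinv :=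
  stmt_10_general m d kp kw rinv hm hd hkw hr g hg νs hνs ν hν
end

section
/- Let α₁(ν) = (ν − r⁻¹)[(k_p² + ν²k_ω²)/(d+ν) − (ν + r⁻¹)k_ω²]. If (k_p/k_ω)² ≠ 2r⁻¹d + r⁻², then α₁(ν*) > 0 for ν* = −d + √(d² + k_p²/k_ω²); if (k_p/k_ω)² = 2r⁻¹d + r⁻², then α₁(ν) ≤ 0 for all ν > 0. -/
/-!
At `ν* = s - d` with `s = √(d² + k_p²/k_ω²)` the numerator `k_p² + ν*² k_ω²` factors as
`2 ν* s k_ω²`, which collapses `α₁(ν*)` to the square `k_ω² (ν* - r⁻¹)²`; it vanishes only if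
`s = d + r⁻¹`, i.e. `(k_p/k_ω)² = 2 r⁻¹ d + r⁻²`. Under that relation instead
`α₁(ν) = -k_ω² (d + r⁻¹) (ν - r⁻¹)² / (d + ν)`, which is nonpositive for `ν > 0`.
-/

open Real

noncomputable def alphaOne (d kp kw rinv ν : ℝ) : ℝ :=
  (ν - rinv) * ((kp ^ 2 + ν ^ 2 * kw ^ 2) / (d + ν) - (ν + rinv) * kw ^ 2)

section

variable {d kp kw rinv : ℝ}

theorem alphaOne_sub_eq_sq {s : ℝ} (hs : s ≠ 0) (hkw : kw ≠ 0)
    (hs2 : s ^ 2 = d ^ 2 + kp ^ 2 / kw ^ 2) :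
    alphaOne d kp kw rinv (s - d) = kw ^ 2 * (s - d - rinv) ^ 2 := by
  have hkp : kp ^ 2 = (s ^ 2 - d ^ 2) * kw ^ 2 := by
    rw [hs2]; field_simp; ring
  have hnum : kp ^ 2 + (s - d) ^ 2 * kw ^ 2 = s * (2 * (s - d) * kw ^ 2) := by
    rw [hkp]; ring
  rw [alphaOne, add_sub_cancel, hnum, mul_div_cancel_left₀ _ hs]
  ring

theorem alphaOne_eq_of_kp_sq {ν : ℝ} (hdν : d + ν ≠ 0)
    (hkp : kp ^ 2 = (2 * rinv * d + rinv ^ 2) * kw ^ 2) :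
    alphaOne d kp kw rinv ν = -(kw ^ 2 * (d + rinv) * (ν - rinv) ^ 2) / (d + ν) := by
  rw [alphaOne, hkp]
  field_simp
  ring

theorem alphaOne_sqrt_pos (hd : 0 < d) (hkw : kw ≠ 0)
    (hne : (kp / kw) ^ 2 ≠ 2 * rinv * d + rinv ^ 2) :
    0 < alphaOne d kp kw rinv (-d + √(d ^ 2 + kp ^ 2 / kw ^ 2)) := by
  set s := √(d ^ 2 + kp ^ 2 / kw ^ 2)
  have hs2 : s ^ 2 = d ^ 2 + kp ^ 2 / kw ^ 2 := sq_sqrt (by positivity)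
  have hs : 0 < s := sqrt_pos.mpr (by positivity)
  have hs_ne : s ≠ d + rinv := by
    rintro h
    apply hne
    rw [div_pow]
    nlinarith [congrArg (· ^ 2) h]
  rw [neg_add_eq_sub, alphaOne_sub_eq_sq hs.ne' hkw hs2]
  have h_ne : s - d - rinv ≠ 0 := by
    intro h; exact hs_ne (by linarith)
  positivity

theorem alphaOne_nonpos (hd : 0 < d) (hr : 0 < rinv) (hkw : kw ≠ 0)
    (hc : (kp / kw) ^ 2 = 2 * rinv * d + rinv ^ 2) {ν : ℝ} (hν : 0 < ν) :
    alphaOne d kp kw rinv ν ≤ 0 := by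
  have hkp : kp ^ 2 = (2 * rinv * d + rinv ^ 2) * kw ^ 2 := by
    rw [← hc]; field_simp
  rw [alphaOne_eq_of_kp_sq (by positivity) hkp, neg_div]
  exact neg_nonpos.mpr (by positivity)

end

theorem stmt_11_general (d kp kw rinv : ℝ) (hd : 0 < d) (hkw : 0 < kw)
    (hr : 0 < rinv)
    (α₁ : ℝ → ℝ)
    (hα₁ : ∀ ν : ℝ, α₁ ν =
      (ν - rinv) * ((kp ^ 2 + ν ^ 2 * kw ^ 2) / (d + ν) - (ν + rinv) * kw ^ 2))
    (νs : ℝ) (hνs : νs = -d + Real.sqrt (d ^ 2 + kp ^ 2 / kw ^ 2)) :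
    ((kp / kw) ^ 2 ≠ 2 * rinv * d + rinv ^ 2 → 0 < α₁ νs) ∧
      ((kp / kw) ^ 2 = 2 * rinv * d + rinv ^ 2 → ∀ ν : ℝ, 0 < ν → α₁ ν ≤ 0) := by
  have hα : α₁ = alphaOne d kp kw rinv := funext hα₁
  subst hα hνs
  exact ⟨alphaOne_sqrt_pos hd hkw.ne', fun hc _ hν => alphaOne_nonpos hd hr hkw.ne' hc hν⟩

theorem stmt_11 (d kp kw rinv : ℝ) (hd : 0 < d) (hkp : 0 < kp) (hkw : 0 < kw)
    (hr : 0 < rinv)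
    (α₁ : ℝ → ℝ)
    (hα₁ : ∀ ν : ℝ, α₁ ν =
      (ν - rinv) * ((kp ^ 2 + ν ^ 2 * kw ^ 2) / (d + ν) - (ν + rinv) * kw ^ 2))
    (νs : ℝ) (hνs : νs = -d + Real.sqrt (d ^ 2 + kp ^ 2 / kw ^ 2)) :
    ((kp / kw) ^ 2 ≠ 2 * rinv * d + rinv ^ 2 → 0 < α₁ νs) ∧
      ((kp / kw) ^ 2 = 2 * rinv * d + rinv ^ 2 → ∀ ν : ℝ, 0 < ν → α₁ ν ≤ 0) :=
  stmt_11_general d kp kw rinv hd hkw hr α₁ hα₁ νs hνs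
end

section
/- Assume d = 0, m > 0, a > 0, λ ≥ 0. Then τ_rob = arccos(0)/ω_n(a²/(2m²)) satisfies τ_rob ≥ mπ/(2√(a² + 2mλ)), where ω_n(x) = √(√(x² + 2xλ/m) + x + λ/m). -/
/-!
Since `x² + 2xc ≤ (x + c)²`, the inner square root in `ω_n(x)` is at most `x + λ/m`, so
`ω_n(x) ≤ √(2x + 2λ/m)`, which at `x = a²/(2m²)` equals `√(a² + 2mλ)/m`. Dividing `arccos 0 = π/2`
by this upper bound of the (positive) frequency gives the lower bound on `τ_rob`.
-/

open Real

lemma sqrt_sq_add_two_mul_le {x c : ℝ} (hxc : 0 ≤ x + c) : √(x ^ 2 + 2 * x * c) ≤ x + c :=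
  Real.sqrt_le_iff.2 ⟨hxc, by nlinarith [sq_nonneg c]⟩

lemma sqrt_sqrt_add_le {m x lam : ℝ} (hx : 0 ≤ x) (hlam : 0 ≤ lam / m) :
    √(√(x ^ 2 + 2 * x * lam / m) + x + lam / m) ≤ √(2 * (x + lam / m)) := by
  have hinner : √(x ^ 2 + 2 * x * lam / m) ≤ x + lam / m := by
    rw [mul_div_assoc]
    exact sqrt_sq_add_two_mul_le (by positivity)
  exact Real.sqrt_le_sqrt (by linarith)

lemma sqrt_two_mul_half_sq_add {m a lam : ℝ} (hm : 0 < m) :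
    √(2 * (a ^ 2 / (2 * m ^ 2) + lam / m)) = √(a ^ 2 + 2 * m * lam) / m := by
  have hrad : 2 * (a ^ 2 / (2 * m ^ 2) + lam / m) = (a ^ 2 + 2 * m * lam) / m ^ 2 := by
    field_simp
  rw [hrad, Real.sqrt_div' _ (sq_nonneg m), Real.sqrt_sq hm.le]

theorem stmt_14 (m a lam : ℝ) (hm : 0 < m) (ha : 0 < a) (hlam : 0 ≤ lam)
    (ωn : ℝ → ℝ)
    (hωn : ∀ x : ℝ, ωn x =
      Real.sqrt (Real.sqrt (x ^ 2 + 2 * x * lam / m) + x + lam / m))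
    (τrob : ℝ) (hτ : τrob = Real.arccos 0 / ωn (a ^ 2 / (2 * m ^ 2))) :
    τrob ≥ m * Real.pi / (2 * Real.sqrt (a ^ 2 + 2 * m * lam)) := by
  set x := a ^ 2 / (2 * m ^ 2)
  have hx : 0 < x := by positivity
  have hω_pos : 0 < ωn x := by
    rw [hωn]
    exact Real.sqrt_pos.2 (by positivity)
  have hω_le : ωn x ≤ √(a ^ 2 + 2 * m * lam) / m := by
    rw [hωn, ← sqrt_two_mul_half_sq_add hm]
    exact sqrt_sqrt_add_le hx.le (by positivity)
  calc m * π / (2 * √(a ^ 2 + 2 * m * lam))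
      = (π / 2) / (√(a ^ 2 + 2 * m * lam) / m) := by field_simp
    _ ≤ (π / 2) / ωn x := div_le_div_of_nonneg_left (by positivity) hω_pos hω_le
    _ = τrob := by rw [hτ, arccos_zero]
end

section
/- For the 2×2 system with A = [[−(d+ν)/m, 1/m], [δ(ν − r⁻¹), −δ]], C = [1, 0], and B = [[k_p/m, −νk_ω/m], [0, δ(ν − r⁻¹)k_ω]], the solution Q of the Lyapunov equation AᵀQ + QA = −CᵀC yields tr(BᵀQB) = (k_p² + ν²k_ω²)/(2m(d+ν)) + δ²(ν − r⁻¹)[(k_p² + ν²k_ω²)/(d+ν) − (ν + r⁻¹)k_ω²] / (2(d+ν+mδ)δ(d+r⁻¹)), provided A is Hurwitz. -/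
/-!
Only the symmetric part of `Q` enters `tr (Bᵀ Q B)`, through `Q₀₀`, `Q₀₁ + Q₁₀` and `Q₁₁`.
For a `2 × 2` matrix `A` and `C = [1, 0]`, the Lyapunov equation is a linear system in exactly
these three unknowns with determinant `4 · tr A · det A`, so Cramer's rule gives them whenever
`tr A ≠ 0 ≠ det A`. Here `tr A = -(d + ν + mδ)/m` and `det A = δ(d + r⁻¹)/m`.
-/

open Matrix

namespace Matrix

theorem trace_transpose_mul_mul_fin_two (B Q : Matrix (Fin 2) (Fin 2) ℝ) :
    (Bᵀ * Q * B).trace = Q 0 0 * (B 0 0 ^ 2 + B 0 1 ^ 2)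
      + (Q 0 1 + Q 1 0) * (B 0 0 * B 1 0 + B 0 1 * B 1 1) + Q 1 1 * (B 1 0 ^ 2 + B 1 1 ^ 2) := by
  simp only [trace_fin_two, mul_apply, transpose_apply, Fin.sum_univ_two]
  ring

theorem entries_of_lyapunov_fin_two (A Q : Matrix (Fin 2) (Fin 2) ℝ)
    (htr : A.trace ≠ 0) (hdet : A.det ≠ 0)
    (hQ : Aᵀ * Q + Q * A = -(!![(1 : ℝ), 0]ᵀ * !![(1 : ℝ), 0])) :
    Q 0 0 = -(A.det + A 1 1 ^ 2) / (2 * A.trace * A.det) ∧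
      Q 0 1 + Q 1 0 = A 0 1 * A 1 1 / (A.trace * A.det) ∧
      Q 1 1 = -A 0 1 ^ 2 / (2 * A.trace * A.det) := by
  have e00 := congrFun (congrFun hQ 0) 0
  have e01 := congrFun (congrFun hQ 0) 1
  have e10 := congrFun (congrFun hQ 1) 0
  have e11 := congrFun (congrFun hQ 1) 1
  simp only [add_apply, mul_apply, transpose_apply, neg_apply, Fin.sum_univ_two] at e00 e01 e10 e11
  simp only [of_apply, cons_val', cons_val_zero, cons_val_one, cons_val_fin_one, mul_one, mul_zero,
    Finset.sum_const, Finset.univ_unique, Finset.card_singleton, one_smul, neg_zero] at e00 e01 e10 e11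
  rw [trace_fin_two] at htr ⊢
  rw [det_fin_two] at hdet ⊢
  -- The coefficients are the rows of the adjugate of the system in `Q₀₀, Q₀₁ + Q₁₀, Q₁₁`
  -- formed by `e00`, `e01 + e10` and `e11`.
  refine ⟨?_, ?_, ?_⟩
  · rw [eq_div_iff (by simp [htr, hdet])]
    linear_combination (A 0 0 * A 1 1 - A 0 1 * A 1 0 + A 1 1 ^ 2) * e00
      - A 1 0 * A 1 1 * (e01 + e10) + A 1 0 ^ 2 * e11
  · rw [eq_div_iff (by simp [htr, hdet])]
    linear_combination -(A 0 1 * A 1 1) * e00 + A 0 0 * A 1 1 * (e01 + e10) - A 0 0 * A 1 0 * e11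
  · rw [eq_div_iff (by simp [htr, hdet])]
    linear_combination A 0 1 ^ 2 * e00 - A 0 0 * A 0 1 * (e01 + e10)
      + (A 0 0 * (A 0 0 + A 1 1) - A 0 1 * A 1 0) * e11

end Matrix

theorem stmt_16_general (m d ν δ kp kw rinv : ℝ) (hm : 0 < m) (hd : 0 < d) (hν : 0 < ν)
    (hδ : 0 < δ) (hr : 0 < rinv)
    (A B : Matrix (Fin 2) (Fin 2) ℝ) (C : Matrix (Fin 1) (Fin 2) ℝ)
    (hA : A = !![-(d + ν) / m, 1 / m; δ * (ν - rinv), -δ])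
    (hB : B = !![kp / m, -ν * kw / m; 0, δ * (ν - rinv) * kw])
    (hC : C = !![1, 0])
    (Q : Matrix (Fin 2) (Fin 2) ℝ)
    (hQ : Aᵀ * Q + Q * A = -(Cᵀ * C)) :
    (Bᵀ * Q * B).trace =
      (kp ^ 2 + ν ^ 2 * kw ^ 2) / (2 * m * (d + ν)) +
        δ ^ 2 * (ν - rinv) *
            ((kp ^ 2 + ν ^ 2 * kw ^ 2) / (d + ν) - (ν + rinv) * kw ^ 2) /
          (2 * (d + ν + m * δ) * δ * (d + rinv)) := by
  subst hB hC
  have htr : A.trace = -(d + ν + m * δ) / m := by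
    rw [hA, trace_fin_two]
    simp only [of_apply, cons_val', cons_val_zero, cons_val_one, cons_val_fin_one]
    field_simp
    ring
  have hdet : A.det = δ * (d + rinv) / m := by
    rw [hA, det_fin_two]
    simp only [of_apply, cons_val', cons_val_zero, cons_val_one, cons_val_fin_one]
    field_simp
    ring
  obtain ⟨hq00, hq01, hq11⟩ := entries_of_lyapunov_fin_two A Q
    (by rw [htr, neg_div]; exact neg_ne_zero.mpr (by positivity)) (by rw [hdet]; positivity) hQ
  rw [trace_transpose_mul_mul_fin_two, hq00, hq01, hq11, htr, hdet, hA]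
  simp only [of_apply, cons_val', cons_val_zero, cons_val_one, cons_val_fin_one]
  have hden : d + ν + m * δ ≠ 0 := by positivity
  field_simp
  ring

theorem stmt_16 (m d ν δ kp kw rinv : ℝ) (hm : 0 < m) (hd : 0 < d) (hν : 0 < ν)
    (hδ : 0 < δ) (hkp : 0 < kp) (hkw : 0 < kw) (hr : 0 < rinv)
    (A B : Matrix (Fin 2) (Fin 2) ℝ) (C : Matrix (Fin 1) (Fin 2) ℝ)
    (hA : A = !![-(d + ν) / m, 1 / m; δ * (ν - rinv), -δ])
    (hB : B = !![kp / m, -ν * kw / m; 0, δ * (ν - rinv) * kw])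
    (hC : C = !![1, 0])
    (hHurwitz : ∀ μ : ℂ, (A.map (Complex.ofReal)).charpoly.IsRoot μ → μ.re < 0)
    (Q : Matrix (Fin 2) (Fin 2) ℝ)
    (hQ : Aᵀ * Q + Q * A = -(Cᵀ * C)) :
    (Bᵀ * Q * B).trace =
      (kp ^ 2 + ν ^ 2 * kw ^ 2) / (2 * m * (d + ν)) +
        δ ^ 2 * (ν - rinv) *
            ((kp ^ 2 + ν ^ 2 * kw ^ 2) / (d + ν) - (ν + rinv) * kw ^ 2) /
          (2 * (d + ν + m * δ) * δ * (d + rinv)) :=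
  stmt_16_general m d ν δ kp kw rinv hm hd hν hδ hr A B C hA hB hC Q hQ
end

section
/- Let Q be the symmetric 3×3 solution of AᵀQ + QA = −CᵀC with A = [[0,1,0],[−λ/m, −(d+ν)/m, 1/m],[0, δ(ν−r⁻¹), −δ]] and C = [0,1,0], where λ > 0. Then Q₁₂ = 0, Q₂₃ = mδQ₃₃, Q₁₃ = −λQ₃₃, and Q₃₃ = 1/(2[(d+ν+mδ)δ(d+r⁻¹) + (d+ν)λ]), provided A is Hurwitz. -/
/-!
Entrywise, the Lyapunov equation is a triangular linear system in the entries of the symmetric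
matrix `Q`: the diagonal entries `(0,0)` and `(2,2)` give `Q₀₁` and `Q₁₂`, then `(0,2)` gives
`Q₀₂` and `(1,2)` gives `Q₁₁`, and finally `(1,1)`, the only entry with a nonzero right-hand
side, fixes the scale `Q₂₂`.
-/

open Matrix

noncomputable def modalMatrix (m d ν δ rinv lam : ℝ) : Matrix (Fin 3) (Fin 3) ℝ :=
  !![0, 1, 0; -lam / m, -(d + ν) / m, 1 / m; 0, δ * (ν - rinv), -δ]

lemma modalMatrix_lyapunov_entries {m d ν δ rinv lam : ℝ} (hm : m ≠ 0)
    {Q : Matrix (Fin 3) (Fin 3) ℝ} (hQsymm : Q.IsSymm)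
    (hQ : (modalMatrix m d ν δ rinv lam)ᵀ * Q + Q * modalMatrix m d ν δ rinv lam =
      -(!![(0 : ℝ), 1, 0]ᵀ * !![(0 : ℝ), 1, 0])) :
    lam * Q 0 1 = 0 ∧
    Q 1 2 = m * δ * Q 2 2 ∧
    lam * Q 1 2 = Q 0 1 - m * δ * Q 0 2 ∧
    Q 1 1 = -m * Q 0 2 + (d + ν + m * δ) * Q 1 2 - m * δ * (ν - rinv) * Q 2 2 ∧
    2 * ((d + ν) * Q 1 1 - m * Q 0 1 - m * δ * (ν - rinv) * Q 1 2) = m := by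
  have entry (i j : Fin 3) := congrFun₂ hQ i j
  have e00 := entry 0 0
  have e02 := entry 0 2
  have e11 := entry 1 1
  have e12 := entry 1 2
  have e22 := entry 2 2
  simp [modalMatrix, mul_apply, Fin.sum_univ_three] at e00 e02 e11 e12 e22
  rw [hQsymm.apply 0 1] at e00 e11
  rw [hQsymm.apply 1 2] at e11 e22
  field_simp at e00 e02 e11 e12 e22
  exact ⟨by linear_combination -e00 / 2, by linear_combination e22 / 2,
    by linear_combination -e02, by linear_combination e12, by linear_combination -e11⟩

theorem stmt_17_general (m d ν δ rinv lam : ℝ) (hm : 0 < m)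
    (hδ : 0 < δ) (hlam : 0 < lam)
    (A : Matrix (Fin 3) (Fin 3) ℝ) (C : Matrix (Fin 1) (Fin 3) ℝ)
    (hA : A = !![0, 1, 0; -lam / m, -(d + ν) / m, 1 / m; 0, δ * (ν - rinv), -δ])
    (hC : C = !![0, 1, 0])
    (Q : Matrix (Fin 3) (Fin 3) ℝ) (hQsymm : Q.IsSymm)
    (hQ : Aᵀ * Q + Q * A = -(Cᵀ * C)) :
    Q 0 1 = 0 ∧ Q 1 2 = m * δ * Q 2 2 ∧ Q 0 2 = -lam * Q 2 2 ∧
      Q 2 2 = 1 / (2 * ((d + ν + m * δ) * δ * (d + rinv) + (d + ν) * lam)) := by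
  subst hA hC
  obtain ⟨e00, h12, e02, e12, e11⟩ := modalMatrix_lyapunov_entries hm.ne' hQsymm hQ
  have h01 : Q 0 1 = 0 := (mul_eq_zero.1 e00).resolve_left hlam.ne'
  have h02 : Q 0 2 = -lam * Q 2 2 := by
    have hmδ : m * δ * (Q 0 2 + lam * Q 2 2) = 0 := by
      linear_combination e02 + h01 - lam * h12
    linear_combination (mul_eq_zero.1 hmδ).resolve_left (by positivity)
  have h11 : Q 1 1 = m * Q 2 2 * (δ * (d + rinv) + m * δ ^ 2 + lam) := by
    linear_combination e12 - m * h02 + (d + ν + m * δ) * h12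
  refine ⟨h01, h12, h02, eq_one_div_of_mul_eq_one_right ?_⟩
  have hscale :
      m * (2 * ((d + ν + m * δ) * δ * (d + rinv) + (d + ν) * lam) * Q 2 2 - 1) = 0 := by
    linear_combination e11 + 2 * m * h01 - 2 * (d + ν) * h11 + 2 * m * δ * (ν - rinv) * h12
  linear_combination (mul_eq_zero.1 hscale).resolve_left hm.ne'

theorem stmt_17 (m d ν δ rinv lam : ℝ) (hm : 0 < m) (hd : 0 < d) (hν : 0 < ν)
    (hδ : 0 < δ) (hr : 0 < rinv) (hlam : 0 < lam)
    (A : Matrix (Fin 3) (Fin 3) ℝ) (C : Matrix (Fin 1) (Fin 3) ℝ)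
    (hA : A = !![0, 1, 0; -lam / m, -(d + ν) / m, 1 / m; 0, δ * (ν - rinv), -δ])
    (hC : C = !![0, 1, 0])
    (hHurwitz : ∀ μ : ℂ, (A.map (Complex.ofReal)).charpoly.IsRoot μ → μ.re < 0)
    (Q : Matrix (Fin 3) (Fin 3) ℝ) (hQsymm : Q.IsSymm)
    (hQ : Aᵀ * Q + Q * A = -(Cᵀ * C)) :
    Q 0 1 = 0 ∧ Q 1 2 = m * δ * Q 2 2 ∧ Q 0 2 = -lam * Q 2 2 ∧
      Q 2 2 = 1 / (2 * ((d + ν + m * δ) * δ * (d + rinv) + (d + ν) * lam)) :=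
  stmt_17_general m d ν δ rinv lam hm hδ hlam A C hA hC Q hQsymm hQ
end

section
/- Let a > d > 0 and define φ ∈ (π/2, π) by cos(π − φ) = d/a, i.e., φ = arccos(−d/a). Then for the transfer function H(jω) = jωa/(−mω² + djω + λ) with m > 0, λ ≥ 0, the Nyquist plot at the gain-crossover frequency ω̄ (the largest ω > 0 with |H(jω̄)| = 1) has phase margin φ: arg H(jω̄) = −π + φ. -/
/-!
On the unit circle `H(ω)` is the conjugate of `H(ω)⁻¹ = d/a - i (λ/ω - mω)/a`, so at a gain
crossover `H` has real part `d/a` and imaginary part `(λ/ω - mω)/a`. The gain condition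
`d² + (λ/ω - mω)² = a²` is invariant under `ω ↦ λ/(mω)`, which swaps the sign of `λ/ω - mω`;
hence at the largest crossover this imaginary part is negative, and `arg H = -arccos (d/a)`.
-/

open Complex

noncomputable def modalLoop (m a d lam ω : ℝ) : ℂ :=
  (I * ω * a) / (-(m : ℂ) * ω ^ 2 + d * I * ω + lam)

namespace modalLoop

variable {m a d lam ω : ℝ}

theorem inv_eq (ha : a ≠ 0) (hω : ω ≠ 0) :
    (modalLoop m a d lam ω)⁻¹ = ((d / a : ℝ) : ℂ) - ((lam / ω - m * ω) / a : ℝ) * I := by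
  have ha' : (a : ℂ) ≠ 0 := ofReal_ne_zero.2 ha
  have hω' : (ω : ℂ) ≠ 0 := ofReal_ne_zero.2 hω
  rw [modalLoop, inv_div]
  push_cast
  field_simp
  ring_nf
  rw [I_sq]
  ring

theorem re_inv (ha : a ≠ 0) (hω : ω ≠ 0) : (modalLoop m a d lam ω)⁻¹.re = d / a := by
  simp [inv_eq ha hω]

theorem im_inv (ha : a ≠ 0) (hω : ω ≠ 0) :
    (modalLoop m a d lam ω)⁻¹.im = -((lam / ω - m * ω) / a) := by
  simp [inv_eq ha hω]

theorem norm_eq_one_iff (ha : a ≠ 0) (hω : ω ≠ 0) :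
    ‖modalLoop m a d lam ω‖ = 1 ↔ d ^ 2 + (lam / ω - m * ω) ^ 2 = a ^ 2 := by
  rw [← inv_eq_one, ← norm_inv, ← pow_eq_one_iff_of_nonneg (norm_nonneg _) two_ne_zero,
    Complex.sq_norm, normSq_apply, re_inv ha hω, im_inv ha hω]
  field_simp

theorem re_of_norm_eq_one (ha : a ≠ 0) (hω : ω ≠ 0) (h : ‖modalLoop m a d lam ω‖ = 1) :
    (modalLoop m a d lam ω).re = d / a := by
  rw [← re_inv ha hω, inv_eq_conj h, conj_re]

theorem im_of_norm_eq_one (ha : a ≠ 0) (hω : ω ≠ 0) (h : ‖modalLoop m a d lam ω‖ = 1) :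
    (modalLoop m a d lam ω).im = (lam / ω - m * ω) / a := by
  rw [← neg_neg (im _), ← conj_im, ← inv_eq_conj h, im_inv ha hω, neg_neg]

theorem norm_eq_one_of_inversion (hm : m ≠ 0) (hlam : lam ≠ 0) (ha : a ≠ 0) (hω : ω ≠ 0)
    (h : ‖modalLoop m a d lam ω‖ = 1) : ‖modalLoop m a d lam (lam / (m * ω))‖ = 1 := by
  have hω' : lam / (m * ω) ≠ 0 := div_ne_zero hlam (mul_ne_zero hm hω)
  have hflip : lam / (lam / (m * ω)) - m * (lam / (m * ω)) = -(lam / ω - m * ω) := by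
    field_simp
    ring
  rw [norm_eq_one_iff ha hω', hflip, neg_sq]
  exact (norm_eq_one_iff ha hω).1 h

/-- The largest gain crossover lies beyond the resonance `mω² = λ`. -/
theorem reactance_neg_of_largest_crossover (hm : 0 < m) (hd : 0 < d) (ha : d < a) (hω : 0 < ω)
    (hgain : ‖modalLoop m a d lam ω‖ = 1)
    (hmax : ∀ ω' : ℝ, 0 < ω' → ‖modalLoop m a d lam ω'‖ = 1 → ω' ≤ ω) :
    lam / ω - m * ω < 0 := by
  have ha0 : a ≠ 0 := (hd.trans ha).ne'
  have hcross := (norm_eq_one_iff ha0 hω.ne').1 hgain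
  by_contra! hnonneg
  rcases hnonneg.eq_or_lt with hzero | hpos
  · rw [← hzero] at hcross
    nlinarith
  · have hres : m * ω * ω < lam := (lt_div_iff₀ hω).1 (sub_pos.1 hpos)
    have hlam : 0 < lam := (mul_pos (mul_pos hm hω) hω).trans hres
    have hlt : ω < lam / (m * ω) := by
      rw [lt_div_iff₀ (mul_pos hm hω)]
      linarith
    have := hmax _ (by positivity) (norm_eq_one_of_inversion hm.ne' hlam.ne' ha0 hω.ne' hgain)
    linarith

end modalLoop

theorem stmt_18_general (m a d lam : ℝ) (hm : 0 < m) (hd : 0 < d) (ha : d < a)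
    (H : ℝ → ℂ)
    (hH : ∀ ω : ℝ, H ω =
      (Complex.I * ω * a) / (-(m : ℂ) * ω ^ 2 + d * Complex.I * ω + lam))
    (ωb : ℝ) (hωb : 0 < ωb) (hgain : ‖H ωb‖ = 1)
    (hmax : ∀ ω : ℝ, 0 < ω → ‖H ω‖ = 1 → ω ≤ ωb) :
    (H ωb).arg = -Real.pi + Real.arccos (-d / a) := by
  obtain rfl : H = modalLoop m a d lam := funext hH
  have ha0 : a ≠ 0 := (hd.trans ha).ne'
  have him : (modalLoop m a d lam ωb).im < 0 := by
    rw [modalLoop.im_of_norm_eq_one ha0 hωb.ne' hgain]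
    exact div_neg_of_neg_of_pos
      (modalLoop.reactance_neg_of_largest_crossover hm hd ha hωb hgain hmax) (hd.trans ha)
  rw [arg_of_im_neg him, modalLoop.re_of_norm_eq_one ha0 hωb.ne' hgain, hgain, div_one,
    neg_div, Real.arccos_neg]
  ring

theorem stmt_18 (m a d lam : ℝ) (hm : 0 < m) (hd : 0 < d) (ha : d < a)
    (hlam : 0 ≤ lam)
    (H : ℝ → ℂ)
    (hH : ∀ ω : ℝ, H ω =
      (Complex.I * ω * a) / (-(m : ℂ) * ω ^ 2 + d * Complex.I * ω + lam))
    (ωb : ℝ) (hωb : 0 < ωb) (hgain : ‖H ωb‖ = 1)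
    (hmax : ∀ ω : ℝ, 0 < ω → ‖H ω‖ = 1 → ω ≤ ωb) :
    (H ωb).arg = -Real.pi + Real.arccos (-d / a) :=
  stmt_18_general m a d lam hm hd ha H hH ωb hωb hgain hmax
end
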